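/- Let n ≥ 2 and m = n^n + (−1)^{n+1}, let F_q be a finite field whose characteristic p does not divide m, and let ψ ∈ F_q. If there exists a point x = (x_0,…,x_n) in an algebraic closure of F_q with all coordinates x_i nonzero such that F_ψ(x) = 0 and ∂F_ψ/∂x_i(x) = 0 for all i = 0,…,n, then ψ^{n+1} = 1. -/

import Mathlib

/-!
Multiplying `∂F_ψ/∂x_k` by `x_k` turns the singularity conditions at a point of the torus into
linear relations between `P = x_0 ⋯ x_n` and the monomials `a_i = x_i^n x_(i+1)` (`i < n`,
indices mod `n`): `n a_(i+1) + a_i = (n+1) ψ P` and `x_n^(n+1) = ψ P`. Thus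
`a_i - ψ P = -n (a_(i+1) - ψ P)` around a cycle of length `n`, and since `(-n)^n - 1 = ±m ≠ 0`
every `a_i` equals `ψ P`. As `∏ a_i · x_n^(n+1) = P^(n+1)`, this gives
`(ψ P)^(n+1) = P^(n+1)`, i.e. `ψ^(n+1) = 1`.
-/

open MvPolynomial
open scoped BigOperators

noncomputable section

/-- The generalized Klein–Mukai pencil
`F_ψ = x_0^n x_1 + x_1^n x_2 + ⋯ + x_(n-1)^n x_0 + x_n^(n+1) - (n+1) ψ x_0 x_1 ⋯ x_n`. -/
def FKM (n : ℕ) (R : Type*) [CommRing R] (ψ : R) : MvPolynomial (Fin (n+1)) R :=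
  (∑ i : Fin n, (X (Fin.castSucc i) : MvPolynomial (Fin (n+1)) R) ^ n
      * X (Fin.castSucc (finRotate n i)))
    + X (Fin.last n) ^ (n + 1)
    - MvPolynomial.C ((n + 1 : R) * ψ) * ∏ j : Fin (n+1), X j

open Finset

theorem Equiv.Perm.eq_zero_of_eq_mul_apply {α M : Type*} [MonoidWithZero M]
    [IsRightCancelMulZero M] {σ : Equiv.Perm α} {k : ℕ} (hσ : σ ^ k = 1) {c : M}
    (hc : c ^ k ≠ 1) {f : α → M} (hf : ∀ a, f a = c * f (σ a)) (a : α) : f a = 0 := by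
  have iterate : ∀ j a, f a = c ^ j * f ((σ ^ j) a) := by
    intro j
    induction j with
    | zero => simp
    | succ j ih =>
      intro a
      rw [ih, hf, ← mul_assoc, ← pow_succ, pow_succ' σ, Equiv.Perm.mul_apply]
  have h := iterate k a
  rw [hσ, Equiv.Perm.one_apply, eq_comm, mul_left_eq_self₀] at h
  exact h.resolve_left hc

open Fin.NatCast in
theorem finRotate_pow_self (n : ℕ) : finRotate n ^ n = 1 := by
  rcases n with _ | k
  · exact Subsingleton.elim _ _
  ext1 x
  have pow_apply : ∀ j : ℕ, (finRotate (k + 1) ^ j) x = x + (j : Fin (k + 1)) := by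
    intro j
    induction j with
    | zero => simp
    | succ j ih =>
      rw [pow_succ', Equiv.Perm.mul_apply, ih, finRotate_apply, Nat.cast_succ, add_assoc]
  rw [pow_apply, Fin.natCast_self, add_zero, Equiv.Perm.one_apply]

theorem MvPolynomial.pderiv_prod_X {σ R : Type*} [DecidableEq σ] [CommSemiring R]
    (s : Finset σ) (k : σ) :
    pderiv k (∏ j ∈ s, X j : MvPolynomial σ R) =
      if k ∈ s then ∏ j ∈ s.erase k, X j else 0 := by
  induction s using Finset.induction with
  | empty => simp
  | @insert a s ha ih =>
    rw [prod_insert ha, pderiv_mul, ih]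
    rcases eq_or_ne k a with rfl | hka
    · simp [ha, erase_insert ha]
    · simp [hka, erase_insert_of_ne hka.symm,
        prod_insert fun h => ha (mem_of_mem_erase h)]

namespace FKM

variable {n : ℕ} {R : Type*} [CommRing R]

def cyclicTerm (x : Fin (n + 1) → R) (i : Fin n) : R :=
  x i.castSucc ^ n * x (finRotate n i).castSucc

theorem mul_eval_pderiv_last (ψ : R) (x : Fin (n + 1) → R) :
    x (Fin.last n) * eval x (pderiv (Fin.last n) (FKM n R ψ)) =
      (n + 1) * (x (Fin.last n) ^ (n + 1) - ψ * ∏ j, x j) := by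
  have hprod : x (Fin.last n) * ∏ j ∈ univ.erase (Fin.last n), x j = ∏ j, x j :=
    mul_prod_erase univ x (mem_univ _)
  simp [FKM, pderiv_prod_X, pderiv_X_of_ne (Fin.castSucc_lt_last _).ne]
  linear_combination -(n + 1 : R) * ψ * hprod

theorem mul_eval_pderiv_castSucc_finRotate (ψ : R) (x : Fin (n + 1) → R) (i : Fin n) :
    x (finRotate n i).castSucc * eval x (pderiv (finRotate n i).castSucc (FKM n R ψ)) =
      n * cyclicTerm x (finRotate n i) + cyclicTerm x i - (n + 1) * ψ * ∏ j, x j := by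
  have hprod : x (finRotate n i).castSucc * ∏ j ∈ univ.erase (finRotate n i).castSucc, x j =
      ∏ j, x j :=
    mul_prod_erase univ x (mem_univ _)
  have hpow : x (finRotate n i).castSucc * x (finRotate n i).castSucc ^ (n - 1) =
      x (finRotate n i).castSucc ^ n := by
    rw [← pow_succ', Nat.sub_add_cancel i.pos]
  simp [FKM, pderiv_prod_X, pderiv_X, Pi.single_apply,
    pderiv_X_of_ne (Fin.castSucc_lt_last _).ne', sum_add_distrib, cyclicTerm, -finRotate_apply]
  linear_combination
    (n : R) * x (finRotate n (finRotate n i)).castSucc * hpow - (n + 1 : R) * ψ * hprod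

theorem prod_cyclicTerm_mul_pow_last (x : Fin (n + 1) → R) :
    (∏ i, cyclicTerm x i) * x (Fin.last n) ^ (n + 1) = (∏ j, x j) ^ (n + 1) := by
  rw [Fin.prod_univ_castSucc, mul_pow, ← prod_pow]
  simp only [cyclicTerm, prod_mul_distrib, pow_succ]
  rw [Equiv.prod_comp (finRotate n) (fun i => x i.castSucc)]

theorem pow_succ_eq_one_of_eval_pderiv_eq_zero [IsDomain R] {ψ : R}
    (hm : (n : R) ^ n + (-1) ^ (n + 1) ≠ 0) {x : Fin (n + 1) → R} (hx : ∀ i, x i ≠ 0)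
    (hder : ∀ i, eval x (pderiv i (FKM n R ψ)) = 0) : ψ ^ (n + 1) = 1 := by
  have hP : ∏ j, x j ≠ 0 := prod_ne_zero_iff.2 fun j _ => hx j
  have hn1 : (n : R) + 1 ≠ 0 := by
    intro h
    rw [eq_neg_of_add_eq_zero_left h] at hm
    exact hm (by ring)
  have hcyc : (-(n : R)) ^ n ≠ 1 := by
    intro h
    rw [neg_pow] at h
    have hsq : ((-1 : R) ^ n) ^ 2 = 1 := by
      rw [← pow_mul, mul_comm, pow_mul, neg_one_sq, one_pow]
    exact hm (by linear_combination (-1 : R) ^ n * h - (n : R) ^ n * hsq)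
  have hterm : ∀ i, cyclicTerm x i = ψ * ∏ j, x j := fun i => sub_eq_zero.1 <|
    Equiv.Perm.eq_zero_of_eq_mul_apply (finRotate_pow_self n) hcyc
      (f := fun i => cyclicTerm x i - ψ * ∏ j, x j) (fun i => by
        have h := mul_eval_pderiv_castSucc_finRotate ψ x i
        rw [hder, mul_zero] at h
        linear_combination -h) i
  have hlast : x (Fin.last n) ^ (n + 1) = ψ * ∏ j, x j := by
    have h := mul_eval_pderiv_last ψ x
    rw [hder, mul_zero, eq_comm, mul_eq_zero, sub_eq_zero] at h
    exact h.resolve_left hn1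
  have key := prod_cyclicTerm_mul_pow_last x
  rw [prod_congr rfl fun i _ => hterm i, prod_const, card_univ, Fintype.card_fin, hlast,
    ← pow_succ, mul_pow, mul_left_eq_self₀] at key
  exact key.resolve_right (pow_ne_zero _ hP)

end FKM

theorem klein_mukai_toric_singular_implies_unit_power_general (n m : ℕ)
    (hm : (m : ℤ) = (n : ℤ) ^ n + (-1) ^ (n + 1))
    (F : Type) [Field F] (hchar : ¬ (ringChar F ∣ m))
    (ψ : F)
    (x : Fin (n+1) → AlgebraicClosure F) (hx : ∀ i, x i ≠ 0)
    (hder : ∀ i, MvPolynomial.eval x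
      (MvPolynomial.pderiv i
        (FKM n (AlgebraicClosure F) (algebraMap F (AlgebraicClosure F) ψ))) = 0) :
    ψ ^ (n + 1) = 1 := by
  have hmF : (m : F) ≠ 0 := by rwa [Ne, CharP.cast_eq_zero_iff F (ringChar F)]
  have hmK : (n : AlgebraicClosure F) ^ n + (-1) ^ (n + 1) ≠ 0 := by
    have h := congrArg (Int.cast : ℤ → AlgebraicClosure F) hm
    push_cast at h
    rw [← h, ← map_natCast (algebraMap F _)]
    exact (map_ne_zero _).2 hmF
  apply (algebraMap F (AlgebraicClosure F)).injective
  rw [map_pow, map_one]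
  exact FKM.pow_succ_eq_one_of_eval_pderiv_eq_zero hmK hx hder

/-- if `char F_q ∤ m = n^n + (-1)^(n+1)` and the generalized Klein–Mukai
fiber `F_ψ = 0` has a singular point with all coordinates nonzero in an algebraic
closure, then `ψ^(n+1) = 1`. -/
theorem klein_mukai_toric_singular_implies_unit_power (n m : ℕ) (hn : 2 ≤ n)
    (hm : (m : ℤ) = (n : ℤ) ^ n + (-1) ^ (n + 1))
    (F : Type) [Field F] [Fintype F] (hchar : ¬ (ringChar F ∣ m))
    (ψ : F)
    (x : Fin (n+1) → AlgebraicClosure F) (hx : ∀ i, x i ≠ 0)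
    (hzero : MvPolynomial.eval x
      (FKM n (AlgebraicClosure F) (algebraMap F (AlgebraicClosure F) ψ)) = 0)
    (hder : ∀ i, MvPolynomial.eval x
      (MvPolynomial.pderiv i
        (FKM n (AlgebraicClosure F) (algebraMap F (AlgebraicClosure F) ψ))) = 0) :
    ψ ^ (n + 1) = 1 :=
  klein_mukai_toric_singular_implies_unit_power_general n m hm F hchar ψ x hx hder
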